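/- arXiv:2311.15321 — 8 statements merged into one kernel-verified Lean document; each statement's English description precedes it below -/
import Mathlib

section
/- For any connected graph G with n vertices and e(G) edges, the largest eigenvalue of its adjacency matrix satisfies λ₁(G) ≤ √(2·e(G) − n + 1). -/
/-- The largest eigenvalue (index) of a real symmetric matrix. -/
noncomputable def lam1 {n : ℕ} (A : Matrix (Fin n) (Fin n) ℝ) (hA : A.IsHermitian) : ℝ :=
  ⨆ i, hA.eigenvalues i

/-!
Every eigenvalue `μ` of `A = A(G)` gives the eigenvalue `μ²` of `A²`, and by Gershgorin `μ²` is at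
most some row sum of the nonnegative matrix `A²`. The row sum at `i` is `∑_{u ~ i} deg u`, and
since every vertex other than `i` has positive degree in a connected graph,
`2 e(G) = ∑_u deg u ≥ ∑_{u ~ i} deg u + deg i + (n - 1 - deg i)`.
-/

open Finset Matrix Module.End

theorem Matrix.exists_norm_le_sum_norm_of_hasEigenvalue {K ι : Type*} [NormedField K] [Fintype ι]
    [DecidableEq ι] {A : Matrix ι ι K} {μ : K} (hμ : HasEigenvalue (toLin' A) μ) :
    ∃ k, ‖μ‖ ≤ ∑ j, ‖A k j‖ := by
  obtain ⟨k, hk⟩ := eigenvalue_mem_ball hμ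
  refine ⟨k, ?_⟩
  rw [← add_sum_erase _ _ (mem_univ k)]
  calc ‖μ‖ ≤ ‖A k k‖ + ‖μ - A k k‖ := norm_le_norm_add_norm_sub' μ (A k k)
    _ ≤ _ := by gcongr; exact mem_closedBall_iff_norm.mp hk

namespace SimpleGraph

variable {V : Type*} [Fintype V] [DecidableEq V] {G : SimpleGraph V} [DecidableRel G.Adj]

theorem sum_adjMatrix_sq_apply {R : Type*} [Semiring R] (i : V) :
    ∑ j, (G.adjMatrix R ^ 2) i j = ∑ u ∈ G.neighborFinset i, (G.degree u : R) := by
  calc ∑ j, (G.adjMatrix R ^ 2) i j = (G.adjMatrix R ^ 2 *ᵥ Function.const V 1) i := by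
        simp [mulVec, dotProduct]
    _ = (G.adjMatrix R *ᵥ (G.adjMatrix R *ᵥ Function.const V 1)) i := by rw [sq, mulVec_mulVec]
    _ = _ := by
        rw [adjMatrix_mulVec_apply]
        simp only [adjMatrix_mulVec_const_apply, mul_one]

theorem Connected.card_le_sum_degree_compl_neighborFinset_add_one (hG : G.Connected) (i : V) :
    Fintype.card V ≤ ∑ u ∈ (G.neighborFinset i)ᶜ, G.degree u + 1 := by
  have hi : i ∈ (G.neighborFinset i)ᶜ := by simp
  have hcard := card_compl_add_card (G.neighborFinset i)
  have herase := card_erase_add_one hi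
  have hpos : #((G.neighborFinset i)ᶜ.erase i) ≤ ∑ u ∈ (G.neighborFinset i)ᶜ.erase i, G.degree u :=
    (card_eq_sum_ones _).trans_le <| sum_le_sum fun u hu =>
      (hG.preconnected u i).degree_pos_left (ne_of_mem_erase hu)
  rw [← add_sum_erase _ _ hi, card_neighborFinset_eq_degree] at *
  omega

theorem Connected.sum_degree_neighborFinset_add_card_le (hG : G.Connected) (i : V) :
    ∑ u ∈ G.neighborFinset i, G.degree u + Fintype.card V ≤ 2 * #G.edgeFinset + 1 := by
  rw [← sum_degrees_eq_twice_card_edges, ← sum_add_sum_compl (G.neighborFinset i)]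
  linarith [hG.card_le_sum_degree_compl_neighborFinset_add_one i]

theorem Connected.sq_le_of_hasEigenvalue (hG : G.Connected) {μ : ℝ}
    (hμ : HasEigenvalue (toLin' (G.adjMatrix ℝ)) μ) :
    μ ^ 2 ≤ 2 * #G.edgeFinset - Fintype.card V + 1 := by
  have hμ2 : HasEigenvalue (toLin' (G.adjMatrix ℝ ^ 2)) (μ ^ 2) := by
    simpa [map_pow] using hμ.pow 2
  obtain ⟨k, hk⟩ := exists_norm_le_sum_norm_of_hasEigenvalue hμ2
  have hrow : ∑ j, ‖(G.adjMatrix ℝ ^ 2) k j‖ = ∑ u ∈ G.neighborFinset k, (G.degree u : ℝ) := by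
    rw [← sum_adjMatrix_sq_apply]
    simp only [adjMatrix_pow_apply_eq_card_walk, Real.norm_natCast]
  have hcount : ∑ u ∈ G.neighborFinset k, (G.degree u : ℝ) + Fintype.card V
      ≤ 2 * #G.edgeFinset + 1 := by
    exact_mod_cast hG.sum_degree_neighborFinset_add_card_le k
  rw [Real.norm_eq_abs, abs_sq, hrow] at hk
  linarith

end SimpleGraph

theorem stmt0_general {n : ℕ} (G : SimpleGraph (Fin n)) [DecidableRel G.Adj]
    (hconn : G.Connected) (hA : (G.adjMatrix ℝ).IsHermitian) :
    lam1 (G.adjMatrix ℝ) hA ≤ Real.sqrt (2 * (G.edgeFinset.card : ℝ) - n + 1) := by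
  have := hconn.nonempty
  refine ciSup_le fun i => Real.le_sqrt_of_sq_le ?_
  have hμ : HasEigenvalue (toLin' (G.adjMatrix ℝ)) (hA.eigenvalues i) := by
    rw [hasEigenvalue_iff_mem_spectrum, spectrum_toLin']
    exact hA.eigenvalues_mem_spectrum_real i
  simpa using hconn.sq_le_of_hasEigenvalue hμ

/-- For any connected graph `G` with `n` vertices and `e(G)` edges, the largest eigenvalue of
its adjacency matrix satisfies `λ₁(G) ≤ √(2·e(G) − n + 1)`. -/
theorem stmt0 {n : ℕ} (hn : 1 ≤ n) (G : SimpleGraph (Fin n)) [DecidableRel G.Adj]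
    (hconn : G.Connected) (hA : (G.adjMatrix ℝ).IsHermitian) :
    lam1 (G.adjMatrix ℝ) hA ≤ Real.sqrt (2 * (G.edgeFinset.card : ℝ) - n + 1) :=
  stmt0_general G hconn hA
end

section
/- Let Γ be a connected signed graph with n vertices, e(Γ) edges, and frustration index ε(Γ) (the minimum number of edges whose removal makes Γ balanced). Then λ₁(Γ) ≤ √(2(e(Γ) − ε(Γ)) − n + 1). -/
open Finset Matrix SimpleGraph

namespace SimpleGraph

variable {V : Type*} [Fintype V] [DecidableEq V] (H : SimpleGraph V) [DecidableRel H.Adj]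

theorem sum_degree_neighborFinset_add_card_le (hdeg : ∀ v, 0 < H.degree v) (u : V) :
    ∑ v ∈ H.neighborFinset u, H.degree v + Fintype.card V ≤ 2 * #H.edgeFinset + 1 := by
  set N := H.neighborFinset u
  have hu : u ∉ N := H.notMem_neighborFinset_self u
  have hcard : #(insert u N)ᶜ + (H.degree u + 1) = Fintype.card V := by
    rw [← card_compl_add_card (insert u N), card_insert_of_notMem hu, card_neighborFinset_eq_degree]
  have hcompl : #(insert u N)ᶜ ≤ ∑ v ∈ (insert u N)ᶜ, H.degree v := by
    simpa using card_nsmul_le_sum (insert u N)ᶜ (fun v => H.degree v) 1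
      fun v _ => Nat.one_le_iff_ne_zero.2 (hdeg v).ne'
  rw [← sum_degrees_eq_twice_card_edges, ← sum_compl_add_sum (insert u N), sum_insert hu]
  omega

theorem sum_sq_adjMatrix_mulVec_le (hdeg : ∀ v, 0 < H.degree v) (y : V → ℝ) :
    ∑ v, (H.adjMatrix ℝ *ᵥ y) v ^ 2 ≤
      (2 * #H.edgeFinset - Fintype.card V + 1 : ℝ) * ∑ v, y v ^ 2 := by
  have hnbr (u : V) :
      ∑ v ∈ H.neighborFinset u, (H.degree v : ℝ) ≤ 2 * #H.edgeFinset - Fintype.card V + 1 := by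
    have h : ((∑ v ∈ H.neighborFinset u, H.degree v + Fintype.card V : ℕ) : ℝ) ≤
        (2 * #H.edgeFinset + 1 : ℕ) :=
      mod_cast H.sum_degree_neighborFinset_add_card_le hdeg u
    push_cast at h
    linarith
  calc ∑ v, (H.adjMatrix ℝ *ᵥ y) v ^ 2 = ∑ v, (∑ u ∈ H.neighborFinset v, y u) ^ 2 := by
        simp only [adjMatrix_mulVec_apply]
    _ ≤ ∑ v, (H.degree v : ℝ) * ∑ u ∈ H.neighborFinset v, y u ^ 2 := by
        gcongr with v
        rw [← card_neighborFinset_eq_degree]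
        exact sq_sum_le_card_mul_sum_sq
    _ = ∑ u, ∑ v ∈ H.neighborFinset u, (H.degree v : ℝ) * y u ^ 2 := by
        simp only [mul_sum]
        exact sum_comm' fun v u => by simp [adj_comm]
    _ ≤ ∑ u, (2 * #H.edgeFinset - Fintype.card V + 1 : ℝ) * y u ^ 2 := by
        simp only [← sum_mul]
        gcongr with u
        exact hnbr u
    _ = (2 * #H.edgeFinset - Fintype.card V + 1 : ℝ) * ∑ v, y v ^ 2 := by
        rw [mul_sum]

theorem dotProduct_adjMatrix_mulVec_le_sqrt (hdeg : ∀ v, 0 < H.degree v) {y : V → ℝ}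
    (hy : ∑ v, y v ^ 2 = 1) :
    y ⬝ᵥ (H.adjMatrix ℝ *ᵥ y) ≤ √(2 * #H.edgeFinset - Fintype.card V + 1) := by
  apply Real.le_sqrt_of_sq_le
  calc (y ⬝ᵥ (H.adjMatrix ℝ *ᵥ y)) ^ 2
      ≤ (∑ v, y v ^ 2) * ∑ v, (H.adjMatrix ℝ *ᵥ y) v ^ 2 := sum_mul_sq_le_sq_mul_sq _ _ _
    _ ≤ (∑ v, y v ^ 2) * ((2 * #H.edgeFinset - Fintype.card V + 1 : ℝ) * ∑ v, y v ^ 2) := by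
        gcongr
        exact H.sum_sq_adjMatrix_mulVec_le hdeg y
    _ = 2 * #H.edgeFinset - Fintype.card V + 1 := by rw [hy]; ring

end SimpleGraph

theorem eq_neg_mul_of_ne_mul {a b c : ℝ} (ha : a = 1 ∨ a = -1) (hb : b = 1 ∨ b = -1)
    (hc : c = 1 ∨ c = -1) (h : a ≠ b * c) : a = -(b * c) := by
  rcases ha with rfl | rfl <;> rcases hb with rfl | rfl <;> rcases hc with rfl | rfl <;>
    simp_all

section Switching

variable {V : Type*} {G : SimpleGraph V} {A : Matrix V V ℝ} {sw x : V → ℝ}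

/-- The edges of `G` that are positive in the signed graph `A` switched by `sw`, i.e. in
`diag(sw) * A * diag(sw)`. -/
def switchedPositiveGraph (G : SimpleGraph V) (A : Matrix V V ℝ) (sw : V → ℝ) : SimpleGraph V :=
  fromRel fun i j => G.Adj i j ∧ A i j = sw i * sw j

noncomputable instance (G : SimpleGraph V) (A : Matrix V V ℝ) (sw : V → ℝ) :
    DecidableRel (switchedPositiveGraph G A sw).Adj :=
  Classical.decRel _

theorem switchedPositiveGraph_adj (hA : A.IsSymm) {i j : V} :
    (switchedPositiveGraph G A sw).Adj i j ↔ G.Adj i j ∧ A i j = sw i * sw j := by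
  rw [switchedPositiveGraph, fromRel_adj]
  constructor
  · rintro ⟨-, h | ⟨hji, hA'⟩⟩
    · exact h
    · exact ⟨hji.symm, by rw [← hA.apply, hA', mul_comm]⟩
  · exact fun h => ⟨h.1.ne, Or.inl h⟩

theorem switchedPositiveGraph_le : switchedPositiveGraph G A sw ≤ G := by
  intro i j h
  rw [switchedPositiveGraph, fromRel_adj] at h
  obtain ⟨-, h | h⟩ := h
  exacts [h.1, h.1.symm]

variable [Fintype V] [DecidableEq V] {μ : ℝ}

noncomputable def absSwitchings (x : V → ℝ) : Finset (V → ℝ) :=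
  {sw ∈ Fintype.piFinset fun _ => {1, -1} | ∀ v, sw v * x v = |x v|}

theorem mem_absSwitchings :
    sw ∈ absSwitchings x ↔ (∀ v, sw v = 1 ∨ sw v = -1) ∧ ∀ v, sw v * x v = |x v| := by
  simp [absSwitchings]

theorem mul_entry_mul_le (hA : A.IsSymm) (hsupp : ∀ i j, ¬ G.Adj i j → A i j = 0)
    (hsign : ∀ i j, G.Adj i j → A i j = 1 ∨ A i j = -1) (hsw : sw ∈ absSwitchings x) (i j : V) :
    x i * (A i j * x j) ≤ |x i| * ((switchedPositiveGraph G A sw).adjMatrix ℝ i j * |x j|) := by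
  obtain ⟨hsw, habs⟩ := mem_absSwitchings.1 hsw
  by_cases hij : G.Adj i j
  · by_cases hpos : A i j = sw i * sw j
    · have hH := (switchedPositiveGraph_adj hA).2 ⟨hij, hpos⟩
      rw [adjMatrix_apply, if_pos hH, hpos, ← habs i, ← habs j]
      exact le_of_eq (by ring)
    · have hH : ¬ (switchedPositiveGraph G A sw).Adj i j :=
        fun h => hpos ((switchedPositiveGraph_adj hA).1 h).2
      have hneg : x i * (A i j * x j) = -(|x i| * |x j|) := by
        rw [eq_neg_mul_of_ne_mul (hsign i j hij) (hsw i) (hsw j) hpos, ← habs i, ← habs j]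
        ring
      rw [adjMatrix_apply, if_neg hH, hneg]
      simp [mul_nonneg (abs_nonneg (x i)) (abs_nonneg (x j))]
  · have hH : ¬ (switchedPositiveGraph G A sw).Adj i j := fun h => hij (switchedPositiveGraph_le h)
    rw [adjMatrix_apply, if_neg hH, hsupp i j hij]
    simp

theorem mul_mulVec_le (hA : A.IsSymm) (hsupp : ∀ i j, ¬ G.Adj i j → A i j = 0)
    (hsign : ∀ i j, G.Adj i j → A i j = 1 ∨ A i j = -1) (hsw : sw ∈ absSwitchings x) (i : V) :
    x i * (A *ᵥ x) i ≤ |x i| * ((switchedPositiveGraph G A sw).adjMatrix ℝ *ᵥ |x|) i := by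
  simp only [mulVec, dotProduct, mul_sum, Pi.abs_apply]
  exact sum_le_sum fun j _ => mul_entry_mul_le hA hsupp hsign hsw i j

theorem eq_zero_of_degree_switchedPositiveGraph_eq_zero (hA : A.IsSymm)
    (hsupp : ∀ i j, ¬ G.Adj i j → A i j = 0) (hsign : ∀ i j, G.Adj i j → A i j = 1 ∨ A i j = -1)
    (hsw : sw ∈ absSwitchings x) (hAx : A *ᵥ x = μ • x) (hμ : 0 < μ) {v : V}
    (hv : (switchedPositiveGraph G A sw).degree v = 0) : x v = 0 := by
  have hrow := mul_mulVec_le hA hsupp hsign hsw v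
  rw [adjMatrix_mulVec_apply, card_eq_zero.1 ((card_neighborFinset_eq_degree _ _).trans hv),
    sum_empty, mul_zero, hAx, Pi.smul_apply, smul_eq_mul] at hrow
  have hsq : x v ^ 2 ≤ 0 := by nlinarith
  exact pow_eq_zero_iff two_ne_zero |>.1 (le_antisymm hsq (sq_nonneg _))

theorem switchedPositiveGraph_lt_update_neg (hA : A.IsSymm)
    (hsign : ∀ i j, G.Adj i j → A i j = 1 ∨ A i j = -1) (hsw : ∀ v, sw v = 1 ∨ sw v = -1) {v w : V}
    (hv : (switchedPositiveGraph G A sw).degree v = 0) (hvw : G.Adj v w) :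
    switchedPositiveGraph G A sw < switchedPositiveGraph G A (Function.update sw v (-sw v)) := by
  have hiso : ∀ u, ¬ (switchedPositiveGraph G A sw).Adj v u := fun u h => by
    simpa [hv] using h.degree_pos_left
  have hwv : w ≠ v := hvw.ne'
  refine lt_of_le_not_ge (fun i j hij => ?_) fun hle => hiso w (hle ?_)
  · have hi : i ≠ v := by rintro rfl; exact hiso j hij
    have hj : j ≠ v := by rintro rfl; exact hiso i hij.symm
    rw [switchedPositiveGraph_adj hA] at hij ⊢
    simpa [Function.update_of_ne hi, Function.update_of_ne hj] using hij
  · have hneg : A v w = -(sw v * sw w) := eq_neg_mul_of_ne_mul (hsign v w hvw) (hsw v) (hsw w)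
      fun h => hiso w ((switchedPositiveGraph_adj hA).2 ⟨hvw, h⟩)
    rw [switchedPositiveGraph_adj hA, Function.update_self, Function.update_of_ne hwv, hneg]
    exact ⟨hvw, by ring⟩

theorem exists_mem_absSwitchings_forall_degree_pos (hconn : G.Connected) (hA : A.IsSymm)
    (hsupp : ∀ i j, ¬ G.Adj i j → A i j = 0) (hsign : ∀ i j, G.Adj i j → A i j = 1 ∨ A i j = -1)
    (hAx : A *ᵥ x = μ • x) (hx : ∑ v, x v ^ 2 = 1) (hμ : 0 < μ) :
    ∃ sw ∈ absSwitchings x, ∀ v, 0 < (switchedPositiveGraph G A sw).degree v := by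
  have hne : (absSwitchings x).Nonempty := by
    refine ⟨fun v => if x v < 0 then -1 else 1, mem_absSwitchings.2 ⟨fun v => ?_, fun v => ?_⟩⟩
    · split_ifs <;> simp
    · split_ifs with h
      · rw [abs_of_neg h]; ring
      · rw [abs_of_nonneg (not_lt.1 h), one_mul]
  obtain ⟨sw, hsw, hmax⟩ :=
    exists_max_image (absSwitchings x) (fun sw => #(switchedPositiveGraph G A sw).edgeFinset) hne
  refine ⟨sw, hsw, fun v => Nat.pos_of_ne_zero fun hv => ?_⟩
  have hxv : x v = 0 := eq_zero_of_degree_switchedPositiveGraph_eq_zero hA hsupp hsign hsw hAx hμ hv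
  obtain ⟨u, -, hu⟩ := exists_ne_zero_of_sum_ne_zero (hx ▸ one_ne_zero : ∑ v, x v ^ 2 ≠ 0)
  have hvu : v ≠ u := fun h => hu (by rw [← h, hxv]; ring)
  obtain ⟨w, hvw⟩ := (hconn.preconnected v u).nonempty_neighborSet_left hvu
  obtain ⟨hsw₁, habs⟩ := mem_absSwitchings.1 hsw
  have hflip : Function.update sw v (-sw v) ∈ absSwitchings x := by
    refine mem_absSwitchings.2 ⟨fun u => ?_, fun u => ?_⟩ <;>
      rcases eq_or_ne u v with rfl | huv
    · rcases hsw₁ u with h | h <;> simp [h]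
    · simpa [Function.update_of_ne huv] using hsw₁ u
    · simp [hxv]
    · simpa [Function.update_of_ne huv] using habs u
  exact (hmax _ hflip).not_gt <| card_lt_card <| edgeFinset_ssubset_edgeFinset.2 <|
    switchedPositiveGraph_lt_update_neg hA hsign hsw₁ hv hvw

theorem exists_mem_absSwitchings_le_sqrt (hconn : G.Connected) (hA : A.IsSymm)
    (hsupp : ∀ i j, ¬ G.Adj i j → A i j = 0) (hsign : ∀ i j, G.Adj i j → A i j = 1 ∨ A i j = -1)
    (hAx : A *ᵥ x = μ • x) (hx : ∑ v, x v ^ 2 = 1) (hμ : 0 < μ) :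
    ∃ sw ∈ absSwitchings x,
      μ ≤ √(2 * #(switchedPositiveGraph G A sw).edgeFinset - Fintype.card V + 1) := by
  obtain ⟨sw, hsw, hdeg⟩ :=
    exists_mem_absSwitchings_forall_degree_pos hconn hA hsupp hsign hAx hx hμ
  refine ⟨sw, hsw, ?_⟩
  calc μ = x ⬝ᵥ (A *ᵥ x) := by
        rw [hAx, dotProduct_smul, smul_eq_mul]
        simp only [dotProduct, ← sq, hx, mul_one]
    _ ≤ |x| ⬝ᵥ ((switchedPositiveGraph G A sw).adjMatrix ℝ *ᵥ |x|) :=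
        sum_le_sum fun v _ => mul_mulVec_le hA hsupp hsign hsw v
    _ ≤ _ := dotProduct_adjMatrix_mulVec_le_sqrt _ hdeg (by simpa using hx)

end Switching

theorem exists_mulVec_eq_lam1_smul {n : ℕ} [Nonempty (Fin n)] {A : Matrix (Fin n) (Fin n) ℝ}
    (hA : A.IsHermitian) : ∃ x : Fin n → ℝ, A *ᵥ x = lam1 A hA • x ∧ ∑ i, x i ^ 2 = 1 := by
  obtain ⟨i, hi⟩ := Finite.exists_max hA.eigenvalues
  have hlam : lam1 A hA = hA.eigenvalues i :=
    le_antisymm (ciSup_le hi) (le_ciSup (Set.finite_range _).bddAbove i)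
  refine ⟨hA.eigenvectorBasis i, hlam ▸ hA.mulVec_eigenvectorBasis i, ?_⟩
  rw [← EuclideanSpace.real_norm_sq_eq, hA.eigenvectorBasis.orthonormal.1 i, one_pow]

theorem stmt1_general {n : ℕ} (G : SimpleGraph (Fin n)) [DecidableRel G.Adj]
    (hconn : G.Connected)
    (σ : Fin n → Fin n → ℝ)
    (hval : ∀ i j, G.Adj i j → σ i j = 1 ∨ σ i j = -1)
    (A : Matrix (Fin n) (Fin n) ℝ)
    (hAdef : A = fun i j => if G.Adj i j then σ i j else 0)
    (hA : A.IsHermitian)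
    (eps : ℕ)
    (heps : IsLeast {k : ℕ | ∃ F ⊆ G.edgeFinset, F.card = k ∧
        ∃ sw : Fin n → ℝ, (∀ v, sw v = 1 ∨ sw v = -1) ∧
          ∀ i j, G.Adj i j → s(i, j) ∉ F → σ i j = sw i * sw j} eps) :
    lam1 A hA ≤ Real.sqrt (2 * ((G.edgeFinset.card : ℝ) - eps) - n + 1) := by
  rcases isEmpty_or_nonempty (Fin n) with hV | hV
  · simp [lam1]
  rcases le_or_gt (lam1 A hA) 0 with hle | hpos
  · exact hle.trans (Real.sqrt_nonneg _)
  have hsymm : A.IsSymm := isHermitian_iff_isSymm.1 hA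
  have hsupp : ∀ i j, ¬ G.Adj i j → A i j = 0 := fun i j h => by simp [hAdef, h]
  have hsign : ∀ i j, G.Adj i j → A i j = 1 ∨ A i j = -1 := fun i j h => by
    simpa [hAdef, h] using hval i j h
  obtain ⟨x, hAx, hx⟩ := exists_mulVec_eq_lam1_smul hA
  obtain ⟨sw, hsw, hbound⟩ := exists_mem_absSwitchings_le_sqrt hconn hsymm hsupp hsign hAx hx hpos
  set H := switchedPositiveGraph G A sw
  have hHG : H.edgeFinset ⊆ G.edgeFinset := edgeFinset_mono switchedPositiveGraph_le
  have hfrust : eps ≤ #(G.edgeFinset \ H.edgeFinset) := by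
    refine heps.2 ⟨_, sdiff_subset, rfl, sw, (mem_absSwitchings.1 hsw).1, fun i j hij hF => ?_⟩
    have hH : H.Adj i j := by simpa [hij] using hF
    simpa [hAdef, hij] using ((switchedPositiveGraph_adj hsymm).1 hH).2
  have hcard := card_sdiff_add_card_eq_card hHG
  refine hbound.trans (Real.sqrt_le_sqrt ?_)
  rw [Fintype.card_fin, ← hcard]
  push_cast
  linarith [(Nat.cast_le (α := ℝ)).2 hfrust]

/-- Stanić's bound: a connected signed graph `Γ = (G, σ)` with `n` vertices, `e(Γ)` edges and
frustration index `ε(Γ)` (the minimum number of edges whose removal makes `Γ` balanced, where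
balanced means the signs are switching-equivalent to all-positive) satisfies
`λ₁(Γ) ≤ √(2(e(Γ) − ε(Γ)) − n + 1)`. -/
theorem stmt1 {n : ℕ} (hn : 1 ≤ n) (G : SimpleGraph (Fin n)) [DecidableRel G.Adj]
    (hconn : G.Connected)
    (σ : Fin n → Fin n → ℝ)
    (hsym : ∀ i j, σ i j = σ j i)
    (hval : ∀ i j, G.Adj i j → σ i j = 1 ∨ σ i j = -1)
    (A : Matrix (Fin n) (Fin n) ℝ)
    (hAdef : A = fun i j => if G.Adj i j then σ i j else 0)
    (hA : A.IsHermitian)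
    (eps : ℕ)
    (heps : IsLeast {k : ℕ | ∃ F ⊆ G.edgeFinset, F.card = k ∧
        ∃ sw : Fin n → ℝ, (∀ v, sw v = 1 ∨ sw v = -1) ∧
          ∀ i j, G.Adj i j → s(i, j) ∉ F → σ i j = sw i * sw j} eps) :
    lam1 A hA ≤ Real.sqrt (2 * ((G.edgeFinset.card : ℝ) - eps) - n + 1) :=
  stmt1_general G hconn σ hval A hAdef hA eps heps
end

section
/- Let Γ₁ = C₃⁻ • K_{n−2} be the signed graph on n vertices obtained by identifying one vertex of the all-positive complete graph K_{n−2} with one vertex of an unbalanced triangle C₃⁻ (triangle with exactly one negative edge), where the two edges of C₃⁻ incident to the identified vertex are positive. Then λ₁(Γ₁) > n − 3 for n ≥ 5. -/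
/-- The adjacency matrix of the signed graph `Γ₁ = C₃⁻ • K_{n−2}`: vertices `0` and `1` are
joined by a negative edge, both are joined positively to vertex `2`, the vertices
`2, 3, …, n−1` form an all-positive clique, and there are no other edges. -/
def gamma1 (n : ℕ) : Matrix (Fin n) (Fin n) ℝ := fun i j =>
  if i = j then 0
  else if (i.val = 0 ∧ j.val = 1) ∨ (i.val = 1 ∧ j.val = 0) then -1
  else if (i.val ≤ 1 ∧ j.val = 2) ∨ (j.val ≤ 1 ∧ i.val = 2) then 1
  else if 2 ≤ i.val ∧ 2 ≤ j.val then 1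
  else 0

/-!
The index bounds the Rayleigh quotient of every nonzero vector, since `λ₁ • 1 - A` is positive
semidefinite by the spectral theorem. Put weight `1` on the two triangle vertices `u, w` and
weight `t` on the clique. The quadratic form is `(n-2)(n-3) t² + 4t - 2` and the squared norm
is `(n-2) t² + 2`, so the quotient exceeds `n - 3` exactly when `t > (n-2)/2`; take `t = n - 2`.
-/

open Matrix
open scoped ComplexOrder

namespace Matrix.IsHermitian

variable {𝕜 ι : Type*} [RCLike 𝕜] [Fintype ι] [DecidableEq ι] {A : Matrix ι ι 𝕜}

theorem posSemidef_smul_one_sub (hA : A.IsHermitian) {c : ℝ} (hc : ∀ i, hA.eigenvalues i ≤ c) :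
    ((c : 𝕜) • 1 - A).PosSemidef := by
  set U : Matrix ι ι 𝕜 := (hA.eigenvectorUnitary : Matrix ι ι 𝕜)
  have hU : U * star U = 1 := Unitary.mul_star_self_of_mem hA.eigenvectorUnitary.2
  have hdiag : (c : 𝕜) • 1 - A =
      U * diagonal (fun i ↦ ((c - hA.eigenvalues i : ℝ) : 𝕜)) * star U := by
    conv_lhs => rw [hA.spectral_theorem, Unitary.conjStarAlgAut_apply]
    simp only [RCLike.ofReal_sub, ← diagonal_sub, ← smul_one_eq_diagonal, mul_sub, sub_mul,
      Matrix.mul_smul, Matrix.smul_mul, mul_one, hU]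
    rfl
  rw [hdiag, star_eq_conjTranspose]
  exact (PosSemidef.diagonal fun i ↦ by simpa using hc i).mul_mul_conjTranspose_same U

theorem dotProduct_mulVec_le_iSup_eigenvalues_mul (hA : A.IsHermitian) (x : ι → 𝕜) :
    star x ⬝ᵥ (A *ᵥ x) ≤ ((⨆ i, hA.eigenvalues i : ℝ) : 𝕜) * (star x ⬝ᵥ x) := by
  have hpsd := hA.posSemidef_smul_one_sub fun i ↦ le_ciSup (Set.finite_range _).bddAbove i
  have := hpsd.dotProduct_mulVec_nonneg x
  rwa [sub_mulVec, dotProduct_sub, smul_mulVec, one_mulVec, dotProduct_smul, smul_eq_mul,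
    sub_nonneg] at this

end Matrix.IsHermitian

theorem lt_lam1_of_mul_dotProduct_lt {n : ℕ} {A : Matrix (Fin n) (Fin n) ℝ} (hA : A.IsHermitian)
    {c : ℝ} (x : Fin n → ℝ) (h : c * (x ⬝ᵥ x) < x ⬝ᵥ (A *ᵥ x)) : c < lam1 A hA := by
  by_contra! hc
  have hray := hA.dotProduct_mulVec_le_iSup_eigenvalues_mul x
  rw [star_trivial] at hray
  have := mul_le_mul_of_nonneg_right hc (dotProduct_self_star_nonneg x)
  simp only [star_trivial] at this
  exact (h.trans_le hray).not_ge this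

def gamma1TestVector (n : ℕ) (t : ℝ) : Fin n → ℝ := fun i ↦ if i.val ≤ 1 then 1 else t

theorem gamma1TestVector_dotProduct_self (m : ℕ) (t : ℝ) :
    gamma1TestVector (m + 3) t ⬝ᵥ gamma1TestVector (m + 3) t = (m + 1) * t ^ 2 + 2 := by
  simp [dotProduct, Fin.sum_univ_succ, gamma1TestVector]
  ring

theorem gamma1TestVector_dotProduct_gamma1_mulVec (m : ℕ) (t : ℝ) :
    gamma1TestVector (m + 3) t ⬝ᵥ (gamma1 (m + 3) *ᵥ gamma1TestVector (m + 3) t) =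
      (m + 1) * m * t ^ 2 + 4 * t - 2 := by
  have h2 : 2 % (m + 3) = 2 := Nat.mod_eq_of_lt (by omega)
  simp only [dotProduct, mulVec, Fin.sum_univ_succ]
  simp [gamma1, gamma1TestVector, Fin.ext_iff, h2]
  simp [← Fin.ext_iff, Finset.sum_ite, Finset.filter_ne]
  rcases m with _ | m <;> simp <;> ring

/-- For `n ≥ 5`, the index of `Γ₁ = C₃⁻ • K_{n−2}` satisfies `λ₁(Γ₁) > n − 3`. -/
theorem stmt2 {n : ℕ} (hn : 5 ≤ n) (hA : (gamma1 n).IsHermitian) :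
    (n : ℝ) - 3 < lam1 (gamma1 n) hA := by
  obtain ⟨m, rfl⟩ : ∃ m, n = m + 3 := ⟨n - 3, by omega⟩
  apply lt_lam1_of_mul_dotProduct_lt hA (gamma1TestVector (m + 3) (m + 1))
  rw [gamma1TestVector_dotProduct_self, gamma1TestVector_dotProduct_gamma1_mulVec]
  push_cast
  nlinarith
end

section
/- Let Γ be a signed graph on n vertices with λ₁(Γ) > n − k, and let x be a unit eigenvector of A(Γ) corresponding to λ₁(Γ). Then x has at most k − 2 zero components. -/
open Finset Matrix

section RayleighBound

variable {ι : Type*} [Fintype ι]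

lemma dotProduct_mulVec_eq_of_mulVec_eq_smul {A : Matrix ι ι ℝ} {x : ι → ℝ} {μ : ℝ}
    (hx : x ⬝ᵥ x = 1) (h : A *ᵥ x = μ • x) : x ⬝ᵥ (A *ᵥ x) = μ := by
  rw [h, dotProduct_smul, hx, smul_eq_mul, mul_one]

lemma dotProduct_mulVec_le_sq_sum_abs_sub_sum_sq {A : Matrix ι ι ℝ} (hdiag : ∀ i, A i i = 0)
    (hle : ∀ i j, |A i j| ≤ 1) (x : ι → ℝ) :
    x ⬝ᵥ (A *ᵥ x) ≤ (∑ i, |x i|) ^ 2 - ∑ i, x i ^ 2 := by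
  classical
  have hterm : ∀ i j, x i * (A i j * x j) ≤ |x i| * |x j| - if i = j then x i ^ 2 else 0 := by
    intro i j
    by_cases hij : i = j
    · subst hij
      simp [hdiag, sq]
    · calc x i * (A i j * x j) ≤ |x i * (A i j * x j)| := le_abs_self _
        _ = |A i j| * (|x i| * |x j|) := by rw [abs_mul, abs_mul]; ring
        _ ≤ 1 * (|x i| * |x j|) := by gcongr; exact hle i j
        _ = _ := by simp [hij]
  calc x ⬝ᵥ (A *ᵥ x) = ∑ i, ∑ j, x i * (A i j * x j) := by
        simp only [dotProduct, mulVec, mul_sum]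
    _ ≤ ∑ i, ∑ j, (|x i| * |x j| - if i = j then x i ^ 2 else 0) :=
        sum_le_sum fun i _ => sum_le_sum fun j _ => hterm i j
    _ = _ := by simp [sum_sub_distrib, sq, sum_mul_sum]

lemma sq_sum_abs_le_card_support_mul_sum_sq (x : ι → ℝ) :
    (∑ i, |x i|) ^ 2 ≤ #{i | x i ≠ 0} * ∑ i, x i ^ 2 := by
  have hsupp : ∀ f : ℝ → ℝ, f 0 = 0 → ∑ i ∈ {i | x i ≠ 0}, f (x i) = ∑ i, f (x i) :=
    fun f hf => sum_filter_of_ne fun i _ hi hxi => hi (by rw [hxi, hf])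
  rw [← hsupp (|·|) abs_zero, ← hsupp (· ^ 2) (zero_pow two_ne_zero)]
  exact sq_sum_le_card_mul_sum_sq (f := fun i => |x i|) |>.trans_eq (by simp only [sq_abs])

lemma dotProduct_mulVec_le_card_support_sub_one {A : Matrix ι ι ℝ} (hdiag : ∀ i, A i i = 0)
    (hle : ∀ i j, |A i j| ≤ 1) {x : ι → ℝ} (hx : ∑ i, x i ^ 2 = 1) :
    x ⬝ᵥ (A *ᵥ x) ≤ #{i | x i ≠ 0} - 1 := by
  have := dotProduct_mulVec_le_sq_sum_abs_sub_sum_sq hdiag hle x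
  have := sq_sum_abs_le_card_support_mul_sum_sq x
  rw [hx] at *
  linarith

end RayleighBound

/-- If `Γ` is a signed graph on `n` vertices with `λ₁(Γ) > n − k` and `x` is a unit eigenvector
for `λ₁(Γ)`, then `x` has at most `k − 2` zero components. -/
theorem stmt3 {n k : ℕ} (A : Matrix (Fin n) (Fin n) ℝ) (hA : A.IsHermitian)
    (hdiag : ∀ i, A i i = 0)
    (hent : ∀ i j, A i j = -1 ∨ A i j = 0 ∨ A i j = 1)
    (x : Fin n → ℝ) (hunit : ∑ i, x i ^ 2 = 1)
    (heig : A.mulVec x = lam1 A hA • x)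
    (hgt : (n : ℝ) - k < lam1 A hA) :
    ((Finset.univ.filter fun i => x i = 0).card : ℤ) ≤ (k : ℤ) - 2 := by
  have hle : ∀ i j, |A i j| ≤ 1 := fun i j => by
    rcases hent i j with h | h | h <;> simp [h]
  have hx : x ⬝ᵥ x = 1 := by simpa [dotProduct, sq] using hunit
  have hlam : lam1 A hA ≤ #{i | x i ≠ 0} - 1 := by
    rw [← dotProduct_mulVec_eq_of_mulVec_eq_smul hx heig]
    exact dotProduct_mulVec_le_card_support_sub_one hdiag hle hunit
  have hcard : #{i | x i = 0} + #{i | x i ≠ 0} = n := by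
    simpa using card_filter_add_card_filter_not (s := univ) (fun i => x i = 0)
  have hzero : ((#{i | x i = 0} : ℕ) : ℝ) + 1 < k := by
    have : ((#{i | x i = 0} : ℕ) : ℝ) + #{i | x i ≠ 0} = n := by exact_mod_cast hcard
    linarith
  have : ((#{i | x i = 0} : ℕ) : ℤ) + 1 < k := by exact_mod_cast hzero
  omega
end

section
/- Two signed graphs on the same underlying graph are switching equivalent if and only if they have the same set of balanced cycles (equivalently, every cycle has the same sign in both signed graphs). -/
/-! Writing `τ = σ₁ σ₂` edgewise, the two signed graphs are switching equivalent iff `τ` is a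
coboundary `τ i j = f i f j`, and they agree on cycles iff every cycle is `τ`-positive. If every
cycle is `τ`-positive, so is every closed walk: shortcutting a walk to a path (`Walk.bypass`) only
removes closed subwalks that are cycles or back-and-forth edges. Hence the `τ`-sign of a walk
depends only on its endpoints, and the `τ`-sign of a walk from a fixed root of each component is
the switching function `f`. -/

/-- The sign of a walk in a signed graph: the product of the edge signs along the walk. -/
def walkSign {V : Type*} {G : SimpleGraph V} (σ : V → V → ℝ) {u v : V} (p : G.Walk u v) : ℝ :=
  (p.darts.map fun d => σ d.toProd.1 d.toProd.2).prod

open SimpleGraph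

section WalkSign

variable {V : Type*} {G : SimpleGraph V} (σ : V → V → ℝ)

@[simp] lemma walkSign_nil {v : V} : walkSign σ (Walk.nil : G.Walk v v) = 1 := rfl

@[simp] lemma walkSign_cons {u v w : V} (h : G.Adj u v) (p : G.Walk v w) :
    walkSign σ (Walk.cons h p) = σ u v * walkSign σ p := by
  simp [walkSign]

lemma walkSign_append {u v w : V} (p : G.Walk u v) (q : G.Walk v w) :
    walkSign σ (p.append q) = walkSign σ p * walkSign σ q := by
  simp [walkSign, Walk.darts_append]

@[simp] lemma walkSign_copy {u v u' v' : V} (p : G.Walk u v) (hu : u = u') (hv : v = v') :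
    walkSign σ (p.copy hu hv) = walkSign σ p := by
  subst hu hv; rfl

lemma walkSign_mul (σ' : V → V → ℝ) {u v : V} (p : G.Walk u v) :
    walkSign (fun i j => σ i j * σ' i j) p = walkSign σ p * walkSign σ' p := by
  induction p with
  | nil => simp
  | cons h q ih => simp only [walkSign_cons, ih]; ring

variable {σ}

lemma walkSign_eq_one_or_eq_neg_one (hval : ∀ i j, G.Adj i j → σ i j = 1 ∨ σ i j = -1)
    {u v : V} (p : G.Walk u v) : walkSign σ p = 1 ∨ walkSign σ p = -1 := by
  induction p with
  | nil => simp
  | cons h q ih =>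
    rw [← mul_self_eq_one_iff] at ih ⊢
    rw [walkSign_cons, mul_mul_mul_comm, ih, mul_self_eq_one_iff.mpr (hval _ _ h), one_mul]

lemma walkSign_switch {σ' : V → V → ℝ} {sw : V → ℝ} (hsw : ∀ v, sw v * sw v = 1)
    (h : ∀ i j, G.Adj i j → σ' i j = sw i * σ i j * sw j) {u v : V} (p : G.Walk u v) :
    walkSign σ' p = sw u * walkSign σ p * sw v := by
  induction p with
  | nil => simp [hsw]
  | @cons x y z hxy q ih =>
    rw [walkSign_cons, walkSign_cons, ih, h _ _ hxy]
    linear_combination (sw x * σ x y * walkSign σ q * sw z) * hsw y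

variable (hinv : ∀ u v, G.Adj u v → σ u v * σ v u = 1)
  (hcyc : ∀ (v : V) (c : G.Walk v v), c.IsCycle → walkSign σ c = 1)
include hinv hcyc

lemma walkSign_cons_eq_one_of_isPath {u v : V} (h : G.Adj u v) {p : G.Walk v u}
    (hp : p.IsPath) : walkSign σ (Walk.cons h p) = 1 := by
  by_cases he : s(u, v) ∈ p.edges
  · rw [Sym2.eq_swap] at he
    rw [hp.eq_adj_toWalk_of_mem_edges he]
    simp [hinv u v h]
  · exact hcyc u _ ((Walk.cons_isCycle_iff p h).mpr ⟨hp, he⟩)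

lemma walkSign_bypass [DecidableEq V] {u v : V} (p : G.Walk u v) :
    walkSign σ p.bypass = walkSign σ p := by
  induction p with
  | nil => rfl
  | @cons x y z h q ih =>
    rw [walkSign_cons, ← ih, Walk.bypass]
    split_ifs with hx
    · have hsplit := walkSign_append σ (q.bypass.takeUntil x hx) (q.bypass.dropUntil x hx)
      rw [Walk.take_spec] at hsplit
      have hloop : walkSign σ (Walk.cons h (q.bypass.takeUntil x hx)) = 1 :=
        walkSign_cons_eq_one_of_isPath hinv hcyc h (q.bypass_isPath.takeUntil hx)
      rw [walkSign_cons] at hloop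
      rw [hsplit, ← mul_assoc, hloop, one_mul]
    · rw [walkSign_cons]

lemma walkSign_closed_eq_one {v : V} (c : G.Walk v v) : walkSign σ c = 1 := by
  classical
  rw [← walkSign_bypass hinv hcyc, (Walk.isPath_iff_nil.mp c.bypass_isPath).eq_nil, walkSign_nil]

lemma walkSign_eq_walkSign {a b : V} (p q : G.Walk a b) :
    walkSign σ p = walkSign σ q := by
  have hp := walkSign_closed_eq_one hinv hcyc (p.append q.reverse)
  have hq := walkSign_closed_eq_one hinv hcyc (q.append q.reverse)
  rw [walkSign_append] at hp hq
  exact mul_right_cancel₀ (right_ne_zero_of_mul_eq_one hq) (hp.trans hq.symm)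

lemma exists_sign_potential
    (hval : ∀ i j, G.Adj i j → σ i j = 1 ∨ σ i j = -1) :
    ∃ f : V → ℝ, (∀ v, f v = 1 ∨ f v = -1) ∧ ∀ i j, G.Adj i j → f j = f i * σ i j := by
  let root : V → V := fun v => (G.connectedComponentMk v).out
  have walk : ∀ v, G.Walk (root v) v := fun v =>
    (ConnectedComponent.exact (G.connectedComponentMk v).out_eq).some
  refine ⟨fun v => walkSign σ (walk v),
    fun v => walkSign_eq_one_or_eq_neg_one hval _, fun i j hij => ?_⟩
  have hij' : root i = root j := by
    simp only [root, ConnectedComponent.connectedComponentMk_eq_of_adj hij]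
  show walkSign σ (walk j) = walkSign σ (walk i) * σ i j
  rw [walkSign_eq_walkSign hinv hcyc (walk j)
    (((walk i).append (Walk.cons hij Walk.nil)).copy hij' rfl)]
  simp [walkSign_append]

end WalkSign

/-- Zaslavsky's lemma: two signed graphs `(G, σ₁)` and `(G, σ₂)` on the same underlying graph
are switching equivalent if and only if every cycle has the same sign in both signed graphs
(equivalently, they have the same set of balanced cycles). -/
theorem stmt4 {V : Type*} (G : SimpleGraph V) (σ₁ σ₂ : V → V → ℝ)
    (hsym₁ : ∀ i j, σ₁ i j = σ₁ j i) (hsym₂ : ∀ i j, σ₂ i j = σ₂ j i)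
    (hval₁ : ∀ i j, G.Adj i j → σ₁ i j = 1 ∨ σ₁ i j = -1)
    (hval₂ : ∀ i j, G.Adj i j → σ₂ i j = 1 ∨ σ₂ i j = -1) :
    (∃ sw : V → ℝ, (∀ v, sw v = 1 ∨ sw v = -1) ∧
        ∀ i j, G.Adj i j → σ₂ i j = sw i * σ₁ i j * sw j) ↔
      (∀ (v : V) (p : G.Walk v v), p.IsCycle → walkSign σ₁ p = walkSign σ₂ p) := by
  have hsq₁ := fun i j h => mul_self_eq_one_iff.mpr (hval₁ i j h)
  have hsq₂ := fun i j h => mul_self_eq_one_iff.mpr (hval₂ i j h)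
  constructor
  · rintro ⟨sw, hsw, hswitch⟩ v p -
    rw [walkSign_switch (fun v => mul_self_eq_one_iff.mpr (hsw v)) hswitch p]
    linear_combination (-walkSign σ₁ p) * mul_self_eq_one_iff.mpr (hsw v)
  · intro hcyc
    let τ : V → V → ℝ := fun i j => σ₁ i j * σ₂ i j
    have hinvτ : ∀ u v, G.Adj u v → τ u v * τ v u = 1 := fun u v h => by
      simp only [τ, hsym₁ v u, hsym₂ v u]
      linear_combination (σ₂ u v * σ₂ u v) * hsq₁ u v h + hsq₂ u v h
    have hcycτ : ∀ (v : V) (c : G.Walk v v), c.IsCycle → walkSign τ c = 1 := fun v c hc => by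
      rw [walkSign_mul, ← hcyc v c hc]
      exact mul_self_eq_one_iff.mpr (walkSign_eq_one_or_eq_neg_one hval₁ c)
    have hvalτ : ∀ i j, G.Adj i j → τ i j = 1 ∨ τ i j = -1 := fun i j h =>
      mul_self_eq_one_iff.mp (by linear_combination (σ₂ i j * σ₂ i j) * hsq₁ i j h + hsq₂ i j h)
    obtain ⟨f, hf, hfτ⟩ := exists_sign_potential hinvτ hcycτ hvalτ
    refine ⟨f, hf, fun i j h => ?_⟩
    rw [hfτ i j h]
    linear_combination (-σ₂ i j) * (hsq₁ i j h + σ₁ i j * σ₁ i j * mul_self_eq_one_iff.mpr (hf i))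
end

section
/- Let Γ be a signed graph with a non-negative unit eigenvector x for its largest eigenvalue λ₁(Γ). If Γ′ is obtained from Γ by reversing the sign of some negative edges (changing them to positive), then λ₁(Γ′) ≥ λ₁(Γ), with equality only if x vanishes at every endpoint of every reversed edge. -/
/-!
Since `x` is a non-negative unit vector with `A x = λ₁(Γ) x` and reversing negative edges only
increases entries, `λ₁(Γ) = xᵀ A x ≤ xᵀ A′ x ≤ λ₁(Γ′)`, the last step being the Rayleigh bound
`λ₁(Γ′) • 1 - A′ ⪰ 0`. If equality holds, `x` lies in the kernel of this positive semidefinite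
matrix, so `A′ x = λ₁(Γ′) x = A x`; in the row of a changed entry `(u, v)` the non-negative terms
`(A′ u w - A u w) x w` sum to zero, forcing `x v = 0`, and symmetry gives `x u = 0`.
-/

open Matrix

namespace Matrix

section Monotone

variable {ι R : Type*} [Fintype ι] [Semiring R] [PartialOrder R] {A B : Matrix ι ι R} {x : ι → R}

lemma dotProduct_mulVec_mono [IsOrderedRing R] (hAB : ∀ i j, A i j ≤ B i j) (hx : 0 ≤ x) :
    x ⬝ᵥ A *ᵥ x ≤ x ⬝ᵥ B *ᵥ x :=
  dotProduct_le_dotProduct_of_nonneg_left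
    (fun i => dotProduct_le_dotProduct_of_nonneg_right (hAB i) hx) hx

lemma eq_zero_of_mulVec_eq_of_lt [IsStrictOrderedRing R] (hAB : ∀ i j, A i j ≤ B i j)
    (hx : 0 ≤ x) (heq : A *ᵥ x = B *ᵥ x) {i j : ι} (hlt : A i j < B i j) : x j = 0 := by
  have hterm : A i j * x j = B i j * x j :=
    (Finset.sum_eq_sum_iff_of_le fun k _ => mul_le_mul_of_nonneg_right (hAB i k) (hx k)).1
      (congrFun heq i) j (Finset.mem_univ j)
  by_contra hne
  exact hterm.not_lt (mul_lt_mul_of_pos_right hlt ((hx j).lt_of_ne' hne))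

end Monotone

lemma IsHermitian.posSemidef_algebraMap_sub {ι : Type*} [Fintype ι] [DecidableEq ι]
    {A : Matrix ι ι ℝ} (hA : A.IsHermitian) {c : ℝ} (hc : ∀ i, hA.eigenvalues i ≤ c) :
    (algebraMap ℝ (Matrix ι ι ℝ) c - A).PosSemidef := by
  refine posSemidef_iff_isHermitian_and_spectrum_nonneg.2
    ⟨(IsSelfAdjoint.algebraMap _ (.all c)).sub hA, ?_⟩
  rw [← spectrum.singleton_sub_eq, hA.spectrum_real_eq_range_eigenvalues]
  rintro _ ⟨_, rfl, _, ⟨i, rfl⟩, rfl⟩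
  exact sub_nonneg.2 (hc i)

end Matrix

section lam1

variable {n : ℕ} {A : Matrix (Fin n) (Fin n) ℝ} (hA : A.IsHermitian)

lemma posSemidef_algebraMap_lam1_sub : (algebraMap ℝ _ (lam1 A hA) - A).PosSemidef :=
  hA.posSemidef_algebraMap_sub fun i => le_ciSup (Finite.bddAbove_range _) i

lemma dotProduct_algebraMap_lam1_sub_mulVec (x : Fin n → ℝ) :
    x ⬝ᵥ (algebraMap ℝ _ (lam1 A hA) - A) *ᵥ x = lam1 A hA * (x ⬝ᵥ x) - x ⬝ᵥ A *ᵥ x := by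
  rw [Algebra.algebraMap_eq_smul_one, sub_mulVec, smul_mulVec, one_mulVec, dotProduct_sub,
    dotProduct_smul, smul_eq_mul]

lemma dotProduct_mulVec_le_lam1 (x : Fin n → ℝ) : x ⬝ᵥ A *ᵥ x ≤ lam1 A hA * (x ⬝ᵥ x) := by
  have h := (posSemidef_algebraMap_lam1_sub hA).dotProduct_mulVec_nonneg x
  rw [star_trivial, dotProduct_algebraMap_lam1_sub_mulVec] at h
  linarith

lemma mulVec_eq_lam1_smul_of_dotProduct_mulVec_eq {x : Fin n → ℝ}
    (h : x ⬝ᵥ A *ᵥ x = lam1 A hA * (x ⬝ᵥ x)) : A *ᵥ x = lam1 A hA • x := by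
  have hker := ((posSemidef_algebraMap_lam1_sub hA).dotProduct_mulVec_zero_iff x).1 <| by
    rw [star_trivial, dotProduct_algebraMap_lam1_sub_mulVec, h, sub_self]
  rw [Algebra.algebraMap_eq_smul_one, sub_mulVec, smul_mulVec, one_mulVec] at hker
  exact (sub_eq_zero.1 hker).symm

end lam1

theorem stmt6_general {n : ℕ} (A A' : Matrix (Fin n) (Fin n) ℝ)
    (hA : A.IsHermitian) (hA' : A'.IsHermitian)
    (hchange : ∀ i j, A' i j = A i j ∨ (A i j = -1 ∧ A' i j = 1))
    (x : Fin n → ℝ) (hx : ∀ i, 0 ≤ x i) (hunit : ∑ i, x i ^ 2 = 1)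
    (heig : A.mulVec x = lam1 A hA • x) :
    lam1 A hA ≤ lam1 A' hA' ∧
      (lam1 A' hA' = lam1 A hA → ∀ i j, A' i j ≠ A i j → x i = 0 ∧ x j = 0) := by
  have hle : ∀ i j, A i j ≤ A' i j := fun i j => by
    rcases hchange i j with h | ⟨h, h'⟩ <;> linarith
  have hxx : x ⬝ᵥ x = 1 := by simpa [dotProduct, sq] using hunit
  have hAx : x ⬝ᵥ A *ᵥ x = lam1 A hA := by rw [heig, dotProduct_smul, hxx, smul_eq_mul, mul_one]
  have hmono := dotProduct_mulVec_mono hle hx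
  have hray := dotProduct_mulVec_le_lam1 hA' x
  rw [hxx, mul_one] at hray
  refine ⟨by linarith, fun heq i j hne => ?_⟩
  have heig' : A *ᵥ x = A' *ᵥ x := by
    rw [mulVec_eq_lam1_smul_of_dotProduct_mulVec_eq hA' (by rw [hxx]; linarith), heq, heig]
  have hlt : A i j < A' i j := (hle i j).lt_of_ne hne.symm
  have hlt' : A j i < A' j i := by
    simpa only [← hA.apply i j, ← hA'.apply i j, star_trivial] using hlt
  exact ⟨eq_zero_of_mulVec_eq_of_lt hle hx heig' hlt', eq_zero_of_mulVec_eq_of_lt hle hx heig' hlt⟩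

/-- Let `Γ` (adjacency matrix `A`) have a non-negative unit eigenvector `x` for `λ₁(Γ)`.
If `Γ′` (adjacency matrix `A′`) is obtained from `Γ` by reversing the signs of some negative
edges (changing entries `−1` to `+1`), then `λ₁(Γ′) ≥ λ₁(Γ)`, with equality only if `x`
vanishes at both endpoints of every reversed edge. -/
theorem stmt6 {n : ℕ} (A A' : Matrix (Fin n) (Fin n) ℝ)
    (hA : A.IsHermitian) (hA' : A'.IsHermitian)
    (hdiag : ∀ i, A i i = 0)
    (hent : ∀ i j, A i j = -1 ∨ A i j = 0 ∨ A i j = 1)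
    (hchange : ∀ i j, A' i j = A i j ∨ (A i j = -1 ∧ A' i j = 1))
    (x : Fin n → ℝ) (hx : ∀ i, 0 ≤ x i) (hunit : ∑ i, x i ^ 2 = 1)
    (heig : A.mulVec x = lam1 A hA • x) :
    lam1 A hA ≤ lam1 A' hA' ∧
      (lam1 A' hA' = lam1 A hA → ∀ i j, A' i j ≠ A i j → x i = 0 ∧ x j = 0) :=
  stmt6_general A A' hA hA' hchange x hx hunit heig
end

section
/- In an unbalanced signed graph, every negative cycle of minimum length is chordless (induced): no two non-consecutive vertices of the cycle are adjacent in the graph. -/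
namespace SimpleGraph.Walk

variable {V : Type*} {G : SimpleGraph V}

section Sign

variable (σ : V → V → ℝ)

lemma walkSign_cons {u v w : V} (h : G.Adj u v) (p : G.Walk v w) :
    walkSign σ (cons h p) = σ u v * walkSign σ p := by
  simp [walkSign]

lemma walkSign_append {u v w : V} (p : G.Walk u v) (q : G.Walk v w) :
    walkSign σ (p.append q) = walkSign σ p * walkSign σ q := by
  simp [walkSign, darts_append]

lemma walkSign_rotate [DecidableEq V] {u v : V} (c : G.Walk v v) (h : u ∈ c.support) :
    walkSign σ (c.rotate u h) = walkSign σ c :=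
  ((c.rotate_darts u h).perm.map _).prod_eq

lemma walkSign_eq_one_or_neg_one (hval : ∀ i j, G.Adj i j → σ i j = 1 ∨ σ i j = -1)
    {u v : V} (p : G.Walk u v) : walkSign σ p = 1 ∨ walkSign σ p = -1 := by
  induction p with
  | nil => simp [walkSign]
  | cons h q ih =>
    rw [walkSign_cons]
    rcases hval _ _ h with h₁ | h₁ <;> rcases ih with h₂ | h₂ <;> simp [h₁, h₂]

lemma walkSign_cons_mul_walkSign_cons {a b : V} (hab : G.Adj a b) (hσ : σ a b * σ b a = 1)
    (q : G.Walk a b) (r : G.Walk b a) :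
    walkSign σ (cons hab r) * walkSign σ (cons hab.symm q) = walkSign σ (q.append r) := by
  rw [walkSign_cons, walkSign_cons, walkSign_append]
  linear_combination (walkSign σ q * walkSign σ r) * hσ

end Sign

section Chord

variable [DecidableEq V] {a b : V} {c : G.Walk a a}

lemma IsCycle.isCycle_cons_dropUntil (hc : c.IsCycle) (hb : b ∈ c.support) (hab : G.Adj a b)
    (hchord : s(a, b) ∉ c.edges) : (cons hab (c.dropUntil b hb)).IsCycle := by
  refine (cons_isCycle_iff _ hab).2 ⟨?_, fun h ↦ hchord (c.edges_dropUntil_subset_edges hb h)⟩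
  rw [← c.take_spec hb] at hc
  exact hc.isPath_of_append_right (not_nil_of_ne hab.ne)

lemma IsCycle.isCycle_cons_takeUntil (hc : c.IsCycle) (hb : b ∈ c.support) (hab : G.Adj a b)
    (hchord : s(a, b) ∉ c.edges) : (cons hab.symm (c.takeUntil b hb)).IsCycle := by
  refine (cons_isCycle_iff _ hab.symm).2 ⟨hc.isPath_takeUntil hb, fun h ↦ ?_⟩
  exact hchord (Sym2.eq_swap ▸ c.edges_takeUntil_subset_edges hb h)

lemma IsCycle.length_cons_dropUntil_lt (hc : c.IsCycle) (hb : b ∈ c.support) (hab : G.Adj a b)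
    (hchord : s(a, b) ∉ c.edges) : (cons hab (c.dropUntil b hb)).length < c.length := by
  have h₃ := (hc.isCycle_cons_takeUntil hb hab hchord).three_le_length
  have hsplit := congrArg length (c.take_spec hb)
  simp only [length_cons, length_append] at h₃ hsplit ⊢
  omega

lemma IsCycle.length_cons_takeUntil_lt (hc : c.IsCycle) (hb : b ∈ c.support) (hab : G.Adj a b)
    (hchord : s(a, b) ∉ c.edges) : (cons hab.symm (c.takeUntil b hb)).length < c.length := by
  have h₃ := (hc.isCycle_cons_dropUntil hb hab hchord).three_le_length
  have hsplit := congrArg length (c.take_spec hb)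
  simp only [length_cons, length_append] at h₃ hsplit ⊢
  omega

end Chord

end SimpleGraph.Walk

open SimpleGraph.Walk in
/-- In a signed graph, every negative cycle of minimum length is chordless: any edge of the
graph joining two vertices of the cycle is an edge of the cycle itself. -/
theorem stmt9 {V : Type*} (G : SimpleGraph V) (σ : V → V → ℝ)
    (hsym : ∀ i j, σ i j = σ j i)
    (hval : ∀ i j, G.Adj i j → σ i j = 1 ∨ σ i j = -1)
    {v : V} (p : G.Walk v v) (hp : p.IsCycle) (hneg : walkSign σ p = -1)
    (hmin : ∀ (u : V) (q : G.Walk u u), q.IsCycle → walkSign σ q = -1 → p.length ≤ q.length)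
    (a b : V) (ha : a ∈ p.support) (hb : b ∈ p.support) (hab : G.Adj a b) :
    s(a, b) ∈ p.edges := by
  classical
  by_contra hchord
  set c := p.rotate a ha
  have hc : c.IsCycle := hp.rotate ha
  have hbc : b ∈ c.support := (p.mem_support_rotate_iff a ha).2 hb
  have hchord' : s(a, b) ∉ c.edges := fun h ↦ hchord ((p.rotate_edges a ha).perm.mem_iff.1 h)
  have hσ : σ a b * σ b a = 1 := by
    rw [hsym b a]
    rcases hval a b hab with h | h <;> rw [h] <;> norm_num
  have hsign : walkSign σ (cons hab (c.dropUntil b hbc)) *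
      walkSign σ (cons hab.symm (c.takeUntil b hbc)) = -1 := by
    rw [walkSign_cons_mul_walkSign_cons σ hab hσ, c.take_spec hbc, walkSign_rotate, hneg]
  have hlen : c.length = p.length := p.length_rotate a ha
  rcases walkSign_eq_one_or_neg_one σ hval (cons hab (c.dropUntil b hbc)) with h₁ | h₁
  · rw [h₁, one_mul] at hsign
    have := hmin b _ (hc.isCycle_cons_takeUntil hbc hab hchord') hsign
    have := hc.length_cons_takeUntil_lt hbc hab hchord'
    omega
  · have := hmin a _ (hc.isCycle_cons_dropUntil hbc hab hchord') h₁
    have := hc.length_cons_dropUntil_lt hbc hab hchord'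
    omega
end

section
/- Let Γ be a signed graph on n vertices whose largest eigenvalue satisfies λ₁(Γ) > n − 3, and let x be an eigenvector for λ₁(Γ) with maximum entry x_m at vertex v_m. Then v_m has degree n − 1 or n − 2 in Γ. In particular, if every vertex adjacent to v_m is joined by a positive edge except possibly some negative edges, the degree of v_m is at least n − 2. -/
/-- If `λ₁(Γ) > n − 3` and `x` is a non-negative unit eigenvector for `λ₁(Γ)` attaining its
maximum entry at vertex `v_m`, then `d(v_m) ≥ n − 2`, i.e. `v_m` has degree `n − 1` or `n − 2`. -/
theorem stmt10 {n : ℕ} (A : Matrix (Fin n) (Fin n) ℝ) (hA : A.IsHermitian)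
    (hdiag : ∀ i, A i i = 0)
    (hent : ∀ i j, A i j = -1 ∨ A i j = 0 ∨ A i j = 1)
    (x : Fin n → ℝ) (hx : ∀ i, 0 ≤ x i) (hunit : ∑ i, x i ^ 2 = 1)
    (heig : A.mulVec x = lam1 A hA • x)
    (m : Fin n) (hm : ∀ i, x i ≤ x m) (hmpos : 0 < x m)
    (hgt : (n : ℝ) - 3 < lam1 A hA) :
    n ≤ (Finset.univ.filter fun j => A m j ≠ 0).card + 2 := by
  set d := (Finset.univ.filter fun j => A m j ≠ 0).card with hd
  have hkey : lam1 A hA * x m ≤ (d : ℝ) * x m := by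
    have h1 : lam1 A hA * x m = ∑ j, A m j * x j := by
      have := congrFun heig m
      simp only [Matrix.mulVec, dotProduct, Pi.smul_apply, smul_eq_mul] at this
      linarith [this]
    rw [h1]
    have h2 : ∑ j, A m j * x j ≤ ∑ j ∈ Finset.univ.filter fun j => A m j ≠ 0, x m := by
      rw [← Finset.sum_filter_add_sum_filter_not Finset.univ (fun j => A m j ≠ 0)
        (fun j => A m j * x j)]
      have h3 : ∑ j ∈ Finset.univ.filter (fun j => ¬ A m j ≠ 0), A m j * x j = 0 := by
        apply Finset.sum_eq_zero
        intro j hj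
        simp only [Finset.mem_filter, not_not] at hj
        rw [hj.2, zero_mul]
      rw [h3, add_zero]
      apply Finset.sum_le_sum
      intro j hj
      have : A m j * x j ≤ 1 * x j := by
        apply mul_le_mul_of_nonneg_right _ (hx j)
        rcases hent m j with h | h | h <;> rw [h] <;> norm_num
      calc A m j * x j ≤ 1 * x j := this
        _ = x j := one_mul _
        _ ≤ x m := hm j
    calc ∑ j, A m j * x j ≤ ∑ j ∈ Finset.univ.filter fun j => A m j ≠ 0, x m := h2
      _ = (d : ℝ) * x m := by rw [Finset.sum_const, hd, nsmul_eq_mul]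
  have hlam : lam1 A hA ≤ (d : ℝ) := le_of_mul_le_mul_right (by linarith) hmpos
  have : (n : ℝ) < (d : ℝ) + 3 := by linarith
  have : n < d + 3 := by exact_mod_cast this
  omega
end
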